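/- Let X = c₀ (real sequences converging to 0 with the supremum norm) and let f : c₀ → ℝ be the bounded linear functional f(x) = Σ_{i∈ℕ} ξ_i / 2^{i+1} for x = (ξ_i)_{i∈ℕ}. Then ‖f‖ = 1, so that inf_{‖h‖≤1} f⁰(A;h) = inf_{‖h‖≤1} ⟨f,h⟩ = −1 for every nonempty A ⊂ c₀, but there is no h̃ ∈ c₀ with ‖h̃‖ ≤ 1 and ⟨f,h̃⟩ = −1; in particular f has no optimal descent direction on any nonempty A ⊂ c₀. -/

import Mathlib

open Filter Metric Set NormedSpace
open scoped NNReal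

variable {X : Type*} [NormedAddCommGroup X] [NormedSpace ℝ X]

/-- Clarke's generalized directional derivative
`f⁰(x;h) = limsup_{y→x, t↓0⁺} (f(y+th) − f(y))/t`. -/
noncomputable def clarkeDeriv (f : X → ℝ) (x : X) (h : X) : ℝ :=
  Filter.limsup (fun p : X × ℝ => (f (p.1 + p.2 • h) - f p.1) / p.2)
    ((nhds x) ×ˢ (nhdsWithin 0 (Set.Ioi 0)))

/-- Clarke's generalized gradient `∂f(x) = {a ∈ X* : ⟨a,h⟩ ≤ f⁰(x;h) ∀ h}`. -/
def clarkeGrad (f : X → ℝ) (x : X) : Set (StrongDual ℝ X) :=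
  {a | ∀ h : X, a h ≤ clarkeDeriv f x h}

/-- Directional derivative of `f` on the set `A`: `f⁰(A;h) = sup_{y∈A} f⁰(y;h)`. -/
noncomputable def setDeriv (f : X → ℝ) (A : Set X) (h : X) : ℝ :=
  sSup ((fun y => clarkeDeriv f y h) '' A)

/-- Gradient of `f` on the set `A`: the weak*-closed convex hull of `⋃_{y∈A} ∂f(y)`. -/
def setGrad (f : X → ℝ) (A : Set X) : Set (StrongDual ℝ X) :=
  {a | StrongDual.toWeakDual a ∈
    closure ((StrongDual.toWeakDual (𝕜 := ℝ) (E := X)) '' (convexHull ℝ (⋃ y ∈ A, clarkeGrad f y)))}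

/-- `h` is an optimal (steepest) descent direction of `f` on `A`. -/
noncomputable def IsOptimalDescent (f : X → ℝ) (A : Set X) (h : X) : Prop :=
  ‖h‖ = 1 ∧ (∀ h' : X, ‖h'‖ ≤ 1 → setDeriv f A h ≤ setDeriv f A h') ∧ setDeriv f A h < 0


section Aux

lemma clarkeDeriv_clm (f : X →L[ℝ] ℝ) (x h : X) : clarkeDeriv (⇑f) x h = f h := by
  unfold clarkeDeriv
  have h1 : ∀ᶠ p : X × ℝ in (nhds x) ×ˢ (nhdsWithin 0 (Set.Ioi 0)),
      (f (p.1 + p.2 • h) - f p.1) / p.2 = f h := by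
    filter_upwards [Filter.prod_mem_prod Filter.univ_mem self_mem_nhdsWithin] with p hp
    have hp2 : (0:ℝ) < p.2 := hp.2
    rw [map_add, map_smul, smul_eq_mul]
    field_simp
    ring
  rw [Filter.limsup_congr h1, Filter.limsup_const]

lemma setDeriv_clm (f : X →L[ℝ] ℝ) {A : Set X} (hA : A.Nonempty) (h : X) :
    setDeriv (⇑f) A h = f h := by
  unfold setDeriv
  have : (fun y => clarkeDeriv (⇑f) y h) '' A = {(f h : ℝ)} := by
    ext r
    simp only [Set.mem_image, Set.mem_singleton_iff]
    constructor
    · rintro ⟨y, hy, rfl⟩; exact clarkeDeriv_clm f y h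
    · rintro rfl; exact ⟨hA.some, hA.some_mem, clarkeDeriv_clm f _ h⟩
  rw [this, csSup_singleton]

open ZeroAtInfty BoundedContinuousFunction


lemma myf_summable (x : C₀(ℕ, ℝ)) : Summable (fun i : ℕ => x i / 2 ^ (i+1)) := by
  apply Summable.of_norm
  apply Summable.of_nonneg_of_le (fun i => norm_nonneg _) (fun i => ?_)
    (summable_geometric_two.mul_left ‖x‖)
  have h1 : ‖x i‖ ≤ ‖x‖ := by
    rw [← ZeroAtInftyContinuousMap.norm_toBCF_eq_norm]
    exact BoundedContinuousFunction.norm_coe_le_norm x.toBCF i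
  have h2 : (2:ℝ)^i ≤ 2^(i+1) := by
    apply pow_le_pow_right₀ (by norm_num) (by omega)
  rw [norm_div, norm_pow]
  simp only [Real.norm_ofNat, one_div, inv_pow]
  rw [div_eq_mul_inv]
  apply mul_le_mul h1 ?_ (by positivity) (norm_nonneg _)
  exact inv_anti₀ (by positivity) h2

lemma tsum_half_pow : ∑' i : ℕ, ((1:ℝ)/2)^(i+1) = 1 := by
  have := tsum_geometric_two' 1
  simpa [pow_succ, mul_comm, div_eq_mul_inv, one_div] using this

noncomputable def myf : C₀(ℕ, ℝ) →L[ℝ] ℝ :=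
  LinearMap.mkContinuous
    { toFun := fun x => ∑' i : ℕ, x i / 2 ^ (i+1)
      map_add' := fun x y => by
        rw [← Summable.tsum_add (myf_summable x) (myf_summable y)]
        exact tsum_congr fun i => by
          simp [ZeroAtInftyContinuousMap.coe_add, add_div]
      map_smul' := fun c x => by
        simp only [RingHom.id_apply, smul_eq_mul]
        rw [← tsum_mul_left]
        exact tsum_congr fun i => by
          simp [ZeroAtInftyContinuousMap.coe_smul, smul_eq_mul, mul_div_assoc] }
    1
    (fun x => by
      simp only [LinearMap.coe_mk, AddHom.coe_mk, one_mul]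
      calc ‖∑' i : ℕ, x i / 2 ^ (i+1)‖ ≤ ∑' i : ℕ, ‖x‖ * (1/2)^(i+1) := by
            apply tsum_of_norm_bounded
              ((summable_geometric_two.mul_left ‖x‖).comp_injective
                (add_left_injective 1)).hasSum
            intro i
            have h1 : ‖x i‖ ≤ ‖x‖ := by
              rw [← ZeroAtInftyContinuousMap.norm_toBCF_eq_norm]
              exact BoundedContinuousFunction.norm_coe_le_norm x.toBCF i
            have h2 : (‖x‖ * (1/2)^(i+1) : ℝ) = ‖x‖ * (2^(i+1))⁻¹ := by
              rw [one_div, inv_pow]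
            simp only [Function.comp_apply]
            rw [h2, norm_div, norm_pow, div_eq_mul_inv]
            simp only [Real.norm_ofNat]
            gcongr
          _ = ‖x‖ := by rw [tsum_mul_left, tsum_half_pow, mul_one])

lemma myf_apply (x : C₀(ℕ, ℝ)) : myf x = ∑' i : ℕ, x i / 2 ^ (i + 1) := rfl

/-- the approximating directions: `-1` on the first `n` coordinates, `0` after. -/
noncomputable def hh (n : ℕ) : C₀(ℕ, ℝ) :=
  ⟨⟨fun i => if i < n then (-1:ℝ) else 0, continuous_of_discreteTopology⟩, by
    rw [cocompact_eq_cofinite]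
    apply Tendsto.congr' ?_ tendsto_const_nhds
    rw [EventuallyEq, eventually_cofinite]
    apply Set.Finite.subset (Set.finite_Iio n)
    intro i hi
    simp only [ContinuousMap.coe_mk, Set.mem_setOf_eq] at hi
    by_contra hc
    simp only [Set.mem_Iio, not_lt] at hc
    exact hi ((if_neg (by omega : ¬ i < n)).symm)⟩

lemma hh_apply (n i : ℕ) : hh n i = if i < n then (-1:ℝ) else 0 := rfl

lemma hh_norm_le (n : ℕ) : ‖hh n‖ ≤ 1 := by
  rw [← ZeroAtInftyContinuousMap.norm_toBCF_eq_norm]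
  rw [BoundedContinuousFunction.norm_le zero_le_one]
  intro i
  show ‖hh n i‖ ≤ 1
  rw [hh_apply]
  split <;> simp

lemma geom_sum_range_half (n : ℕ) : ∑ i ∈ Finset.range n, ((1/2:ℝ))^(i+1) = 1 - (1/2)^n := by
  induction n with
  | zero => simp
  | succ m ih => rw [Finset.sum_range_succ, ih]; ring

lemma myf_hh (n : ℕ) : myf (hh n) = -1 + (1/2)^n := by
  rw [myf_apply]
  rw [tsum_eq_sum (s := Finset.range n) (by
    intro i hi
    simp only [Finset.mem_range, not_lt] at hi
    rw [hh_apply, if_neg (by omega), zero_div])]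
  have : ∀ i ∈ Finset.range n, hh n i / 2^(i+1) = -((1/2:ℝ)^(i+1)) := by
    intro i hi
    simp only [Finset.mem_range] at hi
    rw [hh_apply, if_pos hi]
    rw [one_div, inv_pow, neg_div, div_eq_mul_inv, one_mul]
  rw [Finset.sum_congr rfl this, Finset.sum_neg_distrib]
  rw [geom_sum_range_half n]; ring

lemma myf_ge (h : C₀(ℕ, ℝ)) (hle : ‖h‖ ≤ 1) : -1 ≤ myf h := by
  have := myf.le_opNorm h
  have hn : ‖myf‖ ≤ 1 := LinearMap.mkContinuous_norm_le _ zero_le_one _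
  have : |myf h| ≤ 1 := by
    calc |myf h| = ‖myf h‖ := rfl
      _ ≤ ‖myf‖ * ‖h‖ := myf.le_opNorm h
      _ ≤ 1 * 1 := by
          apply mul_le_mul hn hle (norm_nonneg _) zero_le_one
      _ = 1 := by ring
  linarith [abs_le.mp this |>.1]

lemma myf_not_attained : ¬ ∃ h : C₀(ℕ, ℝ), ‖h‖ ≤ 1 ∧ myf h = -1 := by
  rintro ⟨h, hle, heq⟩
  have hsum : Summable (fun i : ℕ => (h i + 1) / 2 ^ (i+1)) := by
    have : (fun i : ℕ => (h i + 1) / 2 ^ (i+1))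
        = fun i : ℕ => h i / 2 ^ (i+1) + (1/2)^(i+1) := by
      funext i; rw [one_div, inv_pow]; ring
    rw [this]
    exact (myf_summable h).add
      (by exact summable_geometric_two.comp_injective (add_left_injective 1) :
        Summable fun i : ℕ => ((1:ℝ)/2)^(i+1))
  have hzero : ∑' i : ℕ, (h i + 1) / 2 ^ (i+1) = 0 := by
    have : (fun i : ℕ => (h i + 1) / 2 ^ (i+1))
        = fun i : ℕ => h i / 2 ^ (i+1) + (1/2)^(i+1) := by
      funext i; rw [one_div, inv_pow]; ring
    have hs : Summable fun i : ℕ => ((1:ℝ)/2)^(i+1) :=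
      summable_geometric_two.comp_injective (add_left_injective 1)
    rw [this, Summable.tsum_add (myf_summable h) hs, tsum_half_pow, ← myf_apply, heq]
    ring
  have hbd : ∀ i, -1 ≤ h i := by
    intro i
    have : ‖h i‖ ≤ ‖h‖ := by
      rw [← ZeroAtInftyContinuousMap.norm_toBCF_eq_norm]
      exact BoundedContinuousFunction.norm_coe_le_norm h.toBCF i
    have : |h i| ≤ 1 := le_trans this hle
    linarith [abs_le.mp this |>.1]
  have hnonneg : ∀ i, 0 ≤ (h i + 1) / 2 ^ (i+1) := by
    intro i
    apply div_nonneg (by linarith [hbd i]) (by positivity)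
  -- h tends to zero, so some coordinate is > -1/2, giving a positive term
  have htend : Filter.Tendsto (⇑h) Filter.atTop (nhds 0) := by
    have := h.zero_at_infty'
    rwa [cocompact_eq_cofinite, Nat.cofinite_eq_atTop] at this
  have : ∀ᶠ i in Filter.atTop, |h i| < 1/2 := by
    have := htend.eventually (eventually_abs_sub_lt 0 (by norm_num : (0:ℝ) < 1/2))
    simpa using this
  obtain ⟨i, hi⟩ := this.exists
  have hpos : 0 < (h i + 1) / 2 ^ (i+1) := by
    apply div_pos ?_ (by positivity)
    linarith [abs_lt.mp hi |>.1]
  have := Summable.le_tsum hsum i (fun j _ => hnonneg j)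
  rw [hzero] at this
  linarith

lemma myf_norm : ‖myf‖ = 1 := by
  apply le_antisymm (LinearMap.mkContinuous_norm_le _ zero_le_one _)
  have key : ∀ n : ℕ, 1 - (1/2:ℝ)^n ≤ ‖myf‖ := by
    intro n
    have h1 : |myf (hh n)| ≤ ‖myf‖ * ‖hh n‖ := myf.le_opNorm (hh n)
    have h2 : ‖myf‖ * ‖hh n‖ ≤ ‖myf‖ * 1 :=
      mul_le_mul_of_nonneg_left (hh_norm_le n) (norm_nonneg myf)
    have hp1 : ((1:ℝ)/2)^n ≤ 1 := pow_le_one₀ (by norm_num) (by norm_num)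
    have h3 : (1 - (1/2:ℝ)^n) ≤ |myf (hh n)| := by
      rw [myf_hh, abs_of_nonpos (by linarith)]
      linarith
    linarith
  show (1:ℝ) ≤ ‖myf‖
  by_contra hc
  push_neg at hc
  obtain ⟨n, hn⟩ := exists_pow_lt_of_lt_one (by linarith : (0:ℝ) < 1 - ‖myf‖) (by norm_num : (1:ℝ)/2 < 1)
  have := key n
  linarith

lemma myf_inf : sInf ((fun h => myf h) '' Metric.closedBall (0 : C₀(ℕ, ℝ)) 1) = -1 := by
  apply le_antisymm
  · -- sInf ≤ -1 + (1/2)^n for all n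
    have hmem : ∀ n : ℕ, (-1 + (1/2:ℝ)^n) ∈ (fun h => myf h) '' Metric.closedBall (0 : C₀(ℕ, ℝ)) 1 := by
      intro n
      exact ⟨hh n, by simpa [Metric.mem_closedBall, dist_zero_right] using hh_norm_le n, myf_hh n⟩
    have hbdd : BddBelow ((fun h => myf h) '' Metric.closedBall (0 : C₀(ℕ, ℝ)) 1) := by
      refine ⟨-1, fun r hr => ?_⟩
      obtain ⟨h, hmem, rfl⟩ := hr
      rw [Metric.mem_closedBall, dist_zero_right] at hmem
      exact myf_ge h hmem
    by_contra hc
    push_neg at hc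
    obtain ⟨n, hn⟩ := exists_pow_lt_of_lt_one
      (by linarith : (0:ℝ) < sInf ((fun h => myf h) '' Metric.closedBall (0 : C₀(ℕ, ℝ)) 1) - (-1))
      (by norm_num : (1:ℝ)/2 < 1)
    have := csInf_le hbdd (hmem n)
    linarith
  · refine le_csInf ⟨myf (hh 0), Set.mem_image_of_mem _ (by
      simpa [Metric.mem_closedBall, dist_zero_right] using hh_norm_le 0)⟩ ?_
    rintro r ⟨h, hmem, rfl⟩
    rw [Metric.mem_closedBall, dist_zero_right] at hmem
    exact myf_ge h hmem

end Aux

open ZeroAtInfty in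
/-- Example 3.3: on `c₀` the functional `f(x) = Σ ξ_i/2^{i+1}` has norm 1,
`inf_{‖h‖≤1} f⁰(A;h) = inf_{‖h‖≤1} ⟨f,h⟩ = −1` for every nonempty `A`, but the infimum
is not attained and there is no optimal descent direction on any nonempty `A`. -/
theorem no_optimal_descent_direction_on_c0 :
    ∃ f : C₀(ℕ, ℝ) →L[ℝ] ℝ,
      (∀ x : C₀(ℕ, ℝ), f x = ∑' i : ℕ, x i / 2 ^ (i + 1)) ∧
      ‖f‖ = 1 ∧
      ∀ A : Set C₀(ℕ, ℝ), A.Nonempty →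
        sInf ((fun h => setDeriv (⇑f) A h) '' Metric.closedBall (0 : C₀(ℕ, ℝ)) 1) = -1 ∧
        sInf ((fun h => f h) '' Metric.closedBall (0 : C₀(ℕ, ℝ)) 1) = -1 ∧
        (¬ ∃ h : C₀(ℕ, ℝ), ‖h‖ ≤ 1 ∧ f h = -1) ∧
        ¬ ∃ h : C₀(ℕ, ℝ), IsOptimalDescent (⇑f) A h := by
  refine ⟨myf, fun x => myf_apply x, myf_norm, fun A hA => ?_⟩
  have himg : (fun h => setDeriv (⇑myf) A h) '' Metric.closedBall (0 : C₀(ℕ, ℝ)) 1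
      = (fun h => myf h) '' Metric.closedBall (0 : C₀(ℕ, ℝ)) 1 := by
    apply Set.image_congr
    intro h _
    exact setDeriv_clm myf hA h
  refine ⟨by rw [himg]; exact myf_inf, myf_inf, myf_not_attained, ?_⟩
  rintro ⟨h, hnorm, hmin, hneg⟩
  have hfh : setDeriv (⇑myf) A h = myf h := setDeriv_clm myf hA h
  have hle1 : ‖h‖ ≤ 1 := le_of_eq hnorm
  have hge : -1 ≤ myf h := myf_ge h hle1
  have hle : myf h ≤ -1 := by
    by_contra hc
    push_neg at hc
    obtain ⟨n, hn⟩ := exists_pow_lt_of_lt_one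
      (by linarith : (0:ℝ) < myf h - (-1)) (by norm_num : (1:ℝ)/2 < 1)
    have := hmin (hh n) (hh_norm_le n)
    rw [hfh, setDeriv_clm myf hA, myf_hh] at this
    linarith
  exact myf_not_attained ⟨h, hle1, le_antisymm hle hge⟩
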